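/- arXiv:2303.02048 — 3 statements merged into one kernel-verified Lean document; each statement's English description precedes it below -/
import Mathlib

section
/- Let T ≥ 1, let M be a real symmetric positive definite T×T matrix, and let D = diag(d₁,…,d_T) with d_s ≥ 0 for all s. Suppose there exist indices t and t' (possibly equal) with M_{tt'} ≠ 0 and d_{t'} > 0. Then I + DM is invertible and [M − M(I + DM)^{−1}]_{tt} > 0. -/
open Matrix

/-- Connected tasks are feasible together: if `M` is symmetric positive definite,
`D = diag(d)` with `d ≥ 0`, and there are indices `t, t'` with `M_{tt'} ≠ 0` and
`d_{t'} > 0`, then `I + DM` is invertible and `[M − M(I+DM)⁻¹]_{tt} > 0`. -/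
theorem connected_task_positive_overlap
    {T : ℕ} (hT : 1 ≤ T)
    (M : Matrix (Fin T) (Fin T) ℝ) (hMsymm : M.IsSymm) (hM : M.PosDef)
    (d : Fin T → ℝ) (hd : ∀ s, 0 ≤ d s)
    (D : Matrix (Fin T) (Fin T) ℝ) (hD : D = Matrix.diagonal d)
    (t t' : Fin T) (hMtt' : M t t' ≠ 0) (hdt' : 0 < d t') :
    IsUnit (1 + D * M) ∧ 0 < (M - M * (1 + D * M)⁻¹) t t := by
  have hMinv : (M⁻¹).PosDef := hM.inv
  have hDpsd : D.PosSemidef := hD ▸ (Matrix.posSemidef_diagonal_iff.mpr hd)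
  set B : Matrix (Fin T) (Fin T) ℝ := M⁻¹ + D with hBdef
  have hB : B.PosDef := hMinv.add_posSemidef hDpsd
  have hMdet : IsUnit M.det := isUnit_iff_ne_zero.mpr (ne_of_gt hM.det_pos)
  have hBdet : IsUnit B.det := isUnit_iff_ne_zero.mpr (ne_of_gt hB.det_pos)
  have hMM : M⁻¹ * M = 1 := Matrix.nonsing_inv_mul M hMdet
  have hMM' : M * M⁻¹ = 1 := Matrix.mul_nonsing_inv M hMdet
  have hBB : B⁻¹ * B = 1 := Matrix.nonsing_inv_mul B hBdet
  have hBB' : B * B⁻¹ = 1 := Matrix.mul_nonsing_inv B hBdet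
  have hBM : B * M = 1 + D * M := by
    rw [hBdef, add_mul, hMM]
  have hunit : IsUnit (1 + D * M) := by
    rw [← hBM]
    exact (Matrix.isUnit_iff_isUnit_det B |>.mpr hBdet).mul
      (Matrix.isUnit_iff_isUnit_det M |>.mpr hMdet)
  refine ⟨hunit, ?_⟩
  -- M * (1 + D*M)⁻¹ = B⁻¹
  have hinv : M * (1 + D * M)⁻¹ = B⁻¹ := by
    rw [← hBM, Matrix.mul_inv_rev, ← Matrix.mul_assoc, hMM', Matrix.one_mul]
  rw [hinv]
  -- key identity: M - B⁻¹ = B⁻¹ * (D + D*M*D) * B⁻¹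
  have hBMB : B * M * B = B + (D + D * M * D) := by
    rw [hBM, add_mul, Matrix.one_mul, hBdef, Matrix.mul_add, Matrix.mul_assoc D M M⁻¹,
      hMM', Matrix.mul_one]
  have hkey : M - B⁻¹ = B⁻¹ * (D + D * M * D) * B⁻¹ := by
    have : B⁻¹ * (B * M * B) * B⁻¹ = M := by
      calc B⁻¹ * (B * M * B) * B⁻¹ = (B⁻¹ * B) * M * (B * B⁻¹) := by noncomm_ring
        _ = M := by rw [hBB, hBB', Matrix.one_mul, Matrix.mul_one]
    calc M - B⁻¹ = B⁻¹ * (B * M * B) * B⁻¹ - B⁻¹ * B * B⁻¹ := by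
          rw [this, hBB, Matrix.one_mul]
      _ = B⁻¹ * (B * M * B - B) * B⁻¹ := by noncomm_ring
      _ = B⁻¹ * (D + D * M * D) * B⁻¹ := by rw [hBMB, add_sub_cancel_left]
  rw [hkey]
  -- B⁻¹ is symmetric
  have hBsymm : Bᵀ = B := by
    rw [hBdef, Matrix.transpose_add, Matrix.transpose_nonsing_inv, hMsymm, hD,
      Matrix.diagonal_transpose]
  have hBinvsymm : (B⁻¹)ᵀ = B⁻¹ := by
    rw [Matrix.transpose_nonsing_inv, hBsymm]
  -- quadratic form
  set e : Fin T → ℝ := Pi.single t 1 with he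
  set v : Fin T → ℝ := B⁻¹ *ᵥ e with hv
  have hentry : (B⁻¹ * (D + D * M * D) * B⁻¹) t t = v ⬝ᵥ ((D + D * M * D) *ᵥ v) := by
    have h1 : ∀ (X : Matrix (Fin T) (Fin T) ℝ), X t t = e ⬝ᵥ (X *ᵥ e) := by
      intro X
      simp [he, Matrix.mulVec_single, single_dotProduct]
    rw [h1 (B⁻¹ * (D + D * M * D) * B⁻¹), ← Matrix.mulVec_mulVec, ← Matrix.mulVec_mulVec,
      ← hv, Matrix.dotProduct_mulVec, ← hBinvsymm, Matrix.vecMul_transpose, ← hv]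
  rw [hentry]
  set w : Fin T → ℝ := D *ᵥ v with hw
  -- w ≠ 0
  have hwne : w ≠ 0 := by
    intro h0
    have hBv : B *ᵥ v = e := by
      rw [hv, Matrix.mulVec_mulVec, hBB', Matrix.one_mulVec]
    have hMiv : M⁻¹ *ᵥ v = e := by
      have : B *ᵥ v = M⁻¹ *ᵥ v + D *ᵥ v := by rw [hBdef, Matrix.add_mulVec]
      rw [hBv, ← hw, h0, add_zero] at this
      exact this.symm
    have hvMe : v = M *ᵥ e := by
      have := congrArg (fun x => M *ᵥ x) hMiv
      simpa [Matrix.mulVec_mulVec, hMM'] using this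
    have : w t' = d t' * M t' t := by
      rw [hw, hvMe, hD]
      simp [Matrix.mulVec_diagonal, he, Matrix.mulVec_single]
    rw [h0] at this
    have hMt't : M t' t = M t t' := by
      have := hMsymm
      rw [Matrix.IsSymm] at this
      calc M t' t = Mᵀ t t' := rfl
        _ = M t t' := by rw [this]
    rw [hMt't] at this
    exact hMtt' (by
      have := this.symm
      rcases mul_eq_zero.mp this with h | h
      · exact absurd h (ne_of_gt hdt')
      · exact h)
  -- split the quadratic form
  have hsplit : v ⬝ᵥ ((D + D * M * D) *ᵥ v)
      = v ⬝ᵥ (D *ᵥ v) + w ⬝ᵥ (M *ᵥ w) := by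
    rw [Matrix.add_mulVec, dotProduct_add]
    congr 1
    rw [← Matrix.mulVec_mulVec, ← Matrix.mulVec_mulVec, ← hw]
    rw [hD]
    simp only [Matrix.mulVec_diagonal, dotProduct]
    exact Finset.sum_congr rfl fun k _ => by
      simp [hw, hD, Matrix.mulVec_diagonal]; ring
  rw [hsplit]
  have h1 : 0 ≤ v ⬝ᵥ (D *ᵥ v) := by
    rw [hD]
    simp only [dotProduct, Matrix.mulVec_diagonal]
    apply Finset.sum_nonneg
    intro k _
    have : v k * (d k * v k) = d k * (v k * v k) := by ring
    rw [this]
    exact mul_nonneg (hd k) (mul_self_nonneg _)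
  have h2 : 0 < w ⬝ᵥ (M *ᵥ w) := by
    have := hM.dotProduct_mulVec_pos hwne
    simpa using this
  linarith
end

section
/- Let D ≥ 1, let x ∈ ℝ, let X be a bounded real random variable and U, U¹, U² bounded random vectors in ℝ^D (all defined on a common probability space), and let Z be a standard Gaussian random vector in ℝ^D independent of (X, U, U¹, U²). Then E[ exp( ∑_{a=1,2} ( x·X·⟨U, U^a⟩ + x·⟨Z, U^a⟩ − (x²/2)·‖U^a‖² ) ) ] = E[ exp( x·X·(⟨U, U¹⟩ + ⟨U, U²⟩) + x²·⟨U¹, U²⟩ ) ]. -/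
/-!
Given `W = (X, U, U¹, U²)`, the exponent is `g(W) + ⟪Z, a(W)⟫` with `a(W) = x (U¹ + U²)`.
By independence and Tonelli the Gaussian vector `Z` can be integrated out first, and its moment
generating function `E e^{⟪Z, a⟫} = e^{‖a‖²/2}` replaces `x⟪Z, U¹ + U²⟫` by
`x²‖U¹ + U²‖²/2`, which cancels the `-(x²/2)‖Uᵃ‖²` terms up to `x²⟪U¹, U²⟫`.
Everything is done with lower Lebesgue integrals of positive functions, so no integrability
is ever needed.
-/

open MeasureTheory ProbabilityTheory
open scoped RealInnerProductSpace ENNReal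

theorem ProbabilityTheory.IndepFun.lintegral_comp_prodMk {Ω α β : Type*}
    {mΩ : MeasurableSpace Ω} {mα : MeasurableSpace α} {mβ : MeasurableSpace β}
    {μ : Measure Ω} [IsFiniteMeasure μ] {X : Ω → α} {Y : Ω → β} (hXY : X ⟂ᵢ[μ] Y)
    (hX : Measurable X) (hY : Measurable Y) {f : α × β → ℝ≥0∞} (hf : Measurable f) :
    ∫⁻ ω, f (X ω, Y ω) ∂μ = ∫⁻ a, ∫⁻ b, f (a, b) ∂(μ.map Y) ∂(μ.map X) := by
  rw [← lintegral_map hf (hX.prodMk hY),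
    hXY.map_prod_eq_prod_map_map hX.aemeasurable hY.aemeasurable, lintegral_prod _ hf.aemeasurable]

section stdGaussian

variable {E : Type*} [NormedAddCommGroup E] [InnerProductSpace ℝ E] [FiniteDimensional ℝ E]
  [MeasurableSpace E] [BorelSpace E]

lemma stdGaussian_map_inner (a : E) :
    (stdGaussian E).map (fun z ↦ ⟪z, a⟫) = gaussianReal 0 (‖a‖ ^ 2).toNNReal := by
  have h := IsGaussian.map_eq_gaussianReal (μ := stdGaussian E) (innerSL ℝ a)
  simp only [integral_strongDual_stdGaussian, variance_dual_stdGaussian, innerSL_apply_norm] at h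
  rw [← h]
  congr 1
  ext z
  simp [real_inner_comm]

lemma integral_exp_inner_stdGaussian (a : E) :
    ∫ z, Real.exp ⟪z, a⟫ ∂(stdGaussian E) = Real.exp (‖a‖ ^ 2 / 2) := by
  simpa [mgf, Real.coe_toNNReal _ (sq_nonneg ‖a‖)] using
    mgf_gaussianReal (stdGaussian_map_inner a) 1

lemma lintegral_ofReal_exp_inner_stdGaussian (a : E) :
    ∫⁻ z, ENNReal.ofReal (Real.exp ⟪z, a⟫) ∂(stdGaussian E)
      = ENNReal.ofReal (Real.exp (‖a‖ ^ 2 / 2)) := by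
  rw [← integral_exp_inner_stdGaussian,
    ofReal_integral_eq_lintegral_ofReal _ (ae_of_all _ fun _ ↦ Real.exp_nonneg _)]
  exact Integrable.of_integral_ne_zero (by rw [integral_exp_inner_stdGaussian]; positivity)

theorem ProbabilityTheory.IndepFun.integral_exp_add_inner_stdGaussian
    {Ω α : Type*} {mΩ : MeasurableSpace Ω} {mα : MeasurableSpace α}
    {μ : Measure Ω} [IsFiniteMeasure μ] {W : Ω → α} {Z : Ω → E} (hWZ : W ⟂ᵢ[μ] Z)
    (hW : Measurable W) (hZ : Measurable Z) (hZlaw : μ.map Z = stdGaussian E)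
    {g : α → ℝ} {a : α → E} (hg : Measurable g) (ha : Measurable a) :
    ∫ ω, Real.exp (g (W ω) + ⟪Z ω, a (W ω)⟫) ∂μ
      = ∫ ω, Real.exp (g (W ω) + ‖a (W ω)‖ ^ 2 / 2) ∂μ := by
  rw [integral_eq_lintegral_of_nonneg_ae (ae_of_all _ fun _ ↦ Real.exp_nonneg _) (by fun_prop),
    integral_eq_lintegral_of_nonneg_ae (ae_of_all _ fun _ ↦ Real.exp_nonneg _) (by fun_prop)]
  congr 1
  calc ∫⁻ ω, ENNReal.ofReal (Real.exp (g (W ω) + ⟪Z ω, a (W ω)⟫)) ∂μ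
      = ∫⁻ w, ∫⁻ z, ENNReal.ofReal (Real.exp (g w + ⟪z, a w⟫)) ∂(stdGaussian E) ∂(μ.map W) := by
        rw [← hZlaw]
        exact hWZ.lintegral_comp_prodMk hW hZ
          (f := fun p ↦ ENNReal.ofReal (Real.exp (g p.1 + ⟪p.2, a p.1⟫))) (by fun_prop)
    _ = ∫⁻ w, ENNReal.ofReal (Real.exp (g w + ‖a w‖ ^ 2 / 2)) ∂(μ.map W) := by
        refine lintegral_congr fun w ↦ ?_
        simp_rw [Real.exp_add, ENNReal.ofReal_mul (Real.exp_nonneg _)]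
        rw [lintegral_const_mul _ (by fun_prop), lintegral_ofReal_exp_inner_stdGaussian]
    _ = ∫⁻ ω, ENNReal.ofReal (Real.exp (g (W ω) + ‖a (W ω)‖ ^ 2 / 2)) ∂μ :=
        lintegral_map (by fun_prop) hW

end stdGaussian

theorem cavity_gaussian_moment_general
    {D : ℕ} (x : ℝ)
    {Ω : Type*} [MeasureSpace Ω] [IsProbabilityMeasure (ℙ : Measure Ω)]
    (X : Ω → ℝ) (U U1 U2 : Ω → EuclideanSpace ℝ (Fin D))
    (hXm : Measurable X) (hUm : Measurable U)
    (hU1m : Measurable U1) (hU2m : Measurable U2)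
    (Z : Ω → EuclideanSpace ℝ (Fin D)) (hZm : Measurable Z)
    (hZ : Measure.map (fun ω => WithLp.ofLp (Z ω)) ℙ = Measure.pi fun _ : Fin D => gaussianReal 0 1)
    (hindep : IndepFun (fun ω => (X ω, U ω, U1 ω, U2 ω)) Z ℙ) :
    ∫ ω, Real.exp
        (x * X ω * ⟪U ω, U1 ω⟫ + x * ⟪Z ω, U1 ω⟫ - x ^ 2 / 2 * ‖U1 ω‖ ^ 2
          + (x * X ω * ⟪U ω, U2 ω⟫ + x * ⟪Z ω, U2 ω⟫ - x ^ 2 / 2 * ‖U2 ω‖ ^ 2)) ∂ℙ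
      = ∫ ω, Real.exp
          (x * X ω * (⟪U ω, U1 ω⟫ + ⟪U ω, U2 ω⟫) + x ^ 2 * ⟪U1 ω, U2 ω⟫) ∂ℙ := by
  have hZlaw : Measure.map Z ℙ = stdGaussian (EuclideanSpace ℝ (Fin D)) := by
    rw [← map_pi_eq_stdGaussian, ← hZ, Measure.map_map (by fun_prop) (by fun_prop)]
    rfl
  let g : ℝ × EuclideanSpace ℝ (Fin D) × EuclideanSpace ℝ (Fin D) × EuclideanSpace ℝ (Fin D) → ℝ :=
    fun w ↦ x * w.1 * ⟪w.2.1, w.2.2.1⟫ - x ^ 2 / 2 * ‖w.2.2.1‖ ^ 2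
      + (x * w.1 * ⟪w.2.1, w.2.2.2⟫ - x ^ 2 / 2 * ‖w.2.2.2‖ ^ 2)
  let a : ℝ × EuclideanSpace ℝ (Fin D) × EuclideanSpace ℝ (Fin D) × EuclideanSpace ℝ (Fin D) →
      EuclideanSpace ℝ (Fin D) :=
    fun w ↦ x • (w.2.2.1 + w.2.2.2)
  have key := hindep.integral_exp_add_inner_stdGaussian (by fun_prop) hZm hZlaw
    (g := g) (a := a) (by fun_prop) (by fun_prop)
  convert key using 4 with ω ω
  · simp only [g, a, inner_add_right, real_inner_smul_right]
    ring
  · simp only [g, a, norm_smul, Real.norm_eq_abs, mul_pow, sq_abs, norm_add_sq_real]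
    ring

/-- Gaussian moment computation in the cavity lemma: integrating out the standard
Gaussian vector `Z` (independent of `(X, U, U¹, U²)`) via `E[e^{⟨a,Z⟩}] = e^{‖a‖²/2}`
gives
`E[exp(∑_{a=1,2} (xX⟨U,Uᵃ⟩ + x⟨Z,Uᵃ⟩ − (x²/2)‖Uᵃ‖²))]
  = E[exp(xX(⟨U,U¹⟩+⟨U,U²⟩) + x²⟨U¹,U²⟩)]`. -/
theorem cavity_gaussian_moment
    {D : ℕ} (hD : 1 ≤ D) (x : ℝ)
    {Ω : Type*} [MeasureSpace Ω] [IsProbabilityMeasure (ℙ : Measure Ω)]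
    (X : Ω → ℝ) (U U1 U2 : Ω → EuclideanSpace ℝ (Fin D))
    (hXm : Measurable X) (hUm : Measurable U)
    (hU1m : Measurable U1) (hU2m : Measurable U2)
    (CX : ℝ) (hXb : ∀ ω, |X ω| ≤ CX)
    (CU : ℝ) (hUb : ∀ ω, ‖U ω‖ ≤ CU)
    (hU1b : ∀ ω, ‖U1 ω‖ ≤ CU) (hU2b : ∀ ω, ‖U2 ω‖ ≤ CU)
    (Z : Ω → EuclideanSpace ℝ (Fin D)) (hZm : Measurable Z)
    (hZ : Measure.map (fun ω => WithLp.ofLp (Z ω)) ℙ = Measure.pi fun _ : Fin D => gaussianReal 0 1)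
    (hindep : IndepFun (fun ω => (X ω, U ω, U1 ω, U2 ω)) Z ℙ) :
    ∫ ω, Real.exp
        (x * X ω * ⟪U ω, U1 ω⟫ + x * ⟪Z ω, U1 ω⟫ - x ^ 2 / 2 * ‖U1 ω‖ ^ 2
          + (x * X ω * ⟪U ω, U2 ω⟫ + x * ⟪Z ω, U2 ω⟫ - x ^ 2 / 2 * ‖U2 ω‖ ^ 2)) ∂ℙ
      = ∫ ω, Real.exp
          (x * X ω * (⟪U ω, U1 ω⟫ + ⟪U ω, U2 ω⟫) + x ^ 2 * ⟪U1 ω, U2 ω⟫) ∂ℙ :=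
  cavity_gaussian_moment_general x X U U1 U2 hXm hUm hU1m hU2m Z hZm hZ hindep
end

section
/- Let q > 0 and let ν be a probability distribution on ℝ. For each D ≥ 1, let X_D ~ ν be a real random variable, let U_D and Û_D be random vectors in ℝ^D, and let Z_D be a standard Gaussian random vector in ℝ^D independent of (X_D, U_D, Û_D), with X_D also independent of (U_D, Û_D). Assume that ⟨U_D, Û_D⟩ → q and ‖Û_D‖² → q in probability as D → ∞. Then the random variable ⟨X_D·U_D + Z_D, Û_D⟩/√q converges in distribution, as D → ∞, to √q·X + ξ, where X ~ ν and ξ is a standard Gaussian random variable independent of X. -/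
/-!
Conditionally on `(X, U, Û)`, the noise term `⟪Z, Û⟫` is centred Gaussian with variance `‖Û‖²`,
and `X` is independent of `(U, Û)`. Hence `𝔼 h ⟪X • U + Z, Û⟫ = 𝔼 ψ (⟪U, Û⟫, ‖Û‖²)`, where
`ψ (s, v) = 𝔼 h (X s + √v ξ)` with `X ~ ν` and `ξ ~ N(0, 1)` independent. The function `ψ` is
bounded and continuous and `(⟪U, Û⟫, ‖Û‖²) → (q, q)` in probability, so the expectations
converge to `ψ (q, q)`; for `h = f (· / √q)` this is the law of `√q X + ξ` tested against `f`.
-/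

open MeasureTheory ProbabilityTheory Filter
open scoped RealInnerProductSpace Topology BoundedContinuousFunction

namespace ProbabilityTheory

variable {E : Type*} [NormedAddCommGroup E] [InnerProductSpace ℝ E] [FiniteDimensional ℝ E]
  [MeasurableSpace E] [BorelSpace E]

lemma stdGaussian_map_inner_right (u : E) :
    (stdGaussian E).map (fun z => ⟪z, u⟫) = (gaussianReal 0 1).map (‖u‖ * ·) := by
  have h := IsGaussian.map_eq_gaussianReal (μ := stdGaussian E) (innerSL ℝ u)
  rw [integral_strongDual_stdGaussian, variance_dual_stdGaussian, innerSL_apply_norm] at h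
  rw [gaussianReal_map_const_mul, mul_zero, mul_one]
  convert h using 2
  · ext z; simp [real_inner_comm]
  · ext; simp

lemma integral_stdGaussian_comp_inner_right (u : E) {g : ℝ → ℝ} (hg : Measurable g) :
    ∫ z, g ⟪z, u⟫ ∂stdGaussian E = ∫ t, g (‖u‖ * t) ∂gaussianReal 0 1 := by
  rw [← integral_map (by fun_prop) hg.aestronglyMeasurable, stdGaussian_map_inner_right,
    integral_map (by fun_prop) hg.aestronglyMeasurable]

lemma IndepFun.integral_comp_prodMk {Ω α β F : Type*} {mΩ : MeasurableSpace Ω} {μ : Measure Ω}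
    [IsFiniteMeasure μ] [MeasurableSpace α] [MeasurableSpace β] [NormedAddCommGroup F]
    [NormedSpace ℝ F] {X : Ω → α} {Y : Ω → β} (hXY : IndepFun X Y μ) (hX : AEMeasurable X μ)
    (hY : AEMeasurable Y μ) {G : α × β → F} (hG : Integrable G ((μ.map X).prod (μ.map Y))) :
    ∫ ω, G (X ω, Y ω) ∂μ = ∫ ω, ∫ y, G (X ω, y) ∂(μ.map Y) ∂μ := by
  have hlaw := (indepFun_iff_map_prod_eq_prod_map_map hX hY).mp hXY
  calc ∫ ω, G (X ω, Y ω) ∂μ = ∫ p, G p ∂((μ.map X).prod (μ.map Y)) := by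
        rw [← hlaw, integral_map (hX.prodMk hY) (hlaw ▸ hG.aestronglyMeasurable)]
    _ = ∫ x, ∫ y, G (x, y) ∂(μ.map Y) ∂(μ.map X) := integral_prod G hG
    _ = ∫ ω, ∫ y, G (X ω, y) ∂(μ.map Y) ∂μ :=
        integral_map hX hG.aestronglyMeasurable.integral_prod_right'

end ProbabilityTheory

namespace BoundedContinuousFunction

variable {X Y F : Type*} [TopologicalSpace X] [FirstCountableTopology X] [TopologicalSpace Y]
  [MeasurableSpace Y] [OpensMeasurableSpace Y] [NormedAddCommGroup F] [NormedSpace ℝ F]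
  [SecondCountableTopologyEither Y F]

noncomputable def integralRight (G : X × Y →ᵇ F) (μ : Measure Y) [IsProbabilityMeasure μ] :
    X →ᵇ F :=
  ofNormedAddCommGroup (fun x => ∫ y, G (x, y) ∂μ)
    (continuous_of_dominated (bound := fun _ => ‖G‖)
      (fun x => (G.continuous.comp (Continuous.prodMk_right x)).aestronglyMeasurable)
      (fun _ => ae_of_all _ fun _ => G.norm_coe_le_norm _) (integrable_const _)
      (ae_of_all _ fun y => G.continuous.comp (Continuous.prodMk_left y)))
    ‖G‖ fun _ => by
      simpa using norm_integral_le_of_norm_le_const (μ := μ)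
        (ae_of_all _ fun _ => G.norm_coe_le_norm _)

end BoundedContinuousFunction

namespace MeasureTheory

lemma TendstoInDistribution.tendsto_integral {ι E : Type*} {Ω : ι → Type*} {Ω' : Type*}
    {m : ∀ i, MeasurableSpace (Ω i)} {μ : (i : ι) → Measure (Ω i)} [∀ i, IsProbabilityMeasure (μ i)]
    {m' : MeasurableSpace Ω'} {μ' : Measure Ω'} [IsProbabilityMeasure μ'] [TopologicalSpace E]
    [MeasurableSpace E] [OpensMeasurableSpace E] {X : (i : ι) → Ω i → E} {Z : Ω' → E} {l : Filter ι}
    (h : TendstoInDistribution X l Z μ μ') (G : E →ᵇ ℝ) :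
    Tendsto (fun i => ∫ ω, G (X i ω) ∂μ i) l (𝓝 (∫ ω, G (Z ω) ∂μ')) := by
  have := ProbabilityMeasure.tendsto_iff_forall_integral_tendsto.mp h.tendsto G
  simp only [ProbabilityMeasure.coe_mk] at this
  rw [integral_map h.aemeasurable_limit G.continuous.aestronglyMeasurable] at this
  exact this.congr fun i => integral_map (h.forall_aemeasurable i) G.continuous.aestronglyMeasurable

end MeasureTheory

noncomputable def gaussianSmoothing (h : ℝ →ᵇ ℝ) : ℝ × ℝ →ᵇ ℝ :=
  (h.compContinuous ⟨fun p : (ℝ × ℝ) × ℝ => p.1.1 + √p.1.2 * p.2, by fun_prop⟩).integralRight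
    (gaussianReal 0 1)

noncomputable def scalarChannelMean (ν : Measure ℝ) [IsProbabilityMeasure ν] (h : ℝ →ᵇ ℝ) :
    ℝ × ℝ →ᵇ ℝ :=
  ((gaussianSmoothing h).compContinuous
    ⟨fun p : (ℝ × ℝ) × ℝ => (p.2 * p.1.1, p.1.2), by fun_prop⟩).integralRight ν

lemma gaussianSmoothing_apply (h : ℝ →ᵇ ℝ) (a v : ℝ) :
    gaussianSmoothing h (a, v) = ∫ t, h (a + √v * t) ∂gaussianReal 0 1 := rfl

lemma scalarChannelMean_apply (ν : Measure ℝ) [IsProbabilityMeasure ν] (h : ℝ →ᵇ ℝ) (s v : ℝ) :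
    scalarChannelMean ν h (s, v) = ∫ x, ∫ t, h (x * s + √v * t) ∂gaussianReal 0 1 ∂ν := rfl

theorem integral_comp_inner_channel {E : Type*} [NormedAddCommGroup E] [InnerProductSpace ℝ E]
    [FiniteDimensional ℝ E] [MeasurableSpace E] [BorelSpace E]
    {Ω : Type*} {mΩ : MeasurableSpace Ω} {P : Measure Ω} [IsProbabilityMeasure P]
    (ν : Measure ℝ) [IsProbabilityMeasure ν] {X : Ω → ℝ} {U Uhat Z : Ω → E}
    (hX : Measurable X) (hU : Measurable U) (hUhat : Measurable Uhat) (hZ : Measurable Z)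
    (hXlaw : P.map X = ν) (hZlaw : P.map Z = stdGaussian E)
    (hZindep : IndepFun (fun ω => (X ω, U ω, Uhat ω)) Z P)
    (hXindep : IndepFun X (fun ω => (U ω, Uhat ω)) P) (h : ℝ →ᵇ ℝ) :
    ∫ ω, h ⟪X ω • U ω + Z ω, Uhat ω⟫ ∂P
      = ∫ ω, scalarChannelMean ν h (⟪U ω, Uhat ω⟫, ‖Uhat ω‖ ^ 2) ∂P := by
  have hnoise : ∀ x : ℝ, ∀ u uhat : E,
      ∫ z, h (x * ⟪u, uhat⟫ + ⟪z, uhat⟫) ∂stdGaussian E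
        = gaussianSmoothing h (x * ⟪u, uhat⟫, ‖uhat‖ ^ 2) := by
    intro x u uhat
    rw [integral_stdGaussian_comp_inner_right uhat
      (g := fun s => h (x * ⟪u, uhat⟫ + s)) (by fun_prop), gaussianSmoothing_apply,
      Real.sqrt_sq (norm_nonneg _)]
  calc ∫ ω, h ⟪X ω • U ω + Z ω, Uhat ω⟫ ∂P
      = ∫ ω, ∫ z, h (X ω * ⟪U ω, Uhat ω⟫ + ⟪z, Uhat ω⟫) ∂stdGaussian E ∂P := by
        rw [← hZlaw, ← hZindep.integral_comp_prodMk (by fun_prop) hZ.aemeasurable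
          (G := fun p => h (p.1.1 * ⟪p.1.2.1, p.1.2.2⟫ + ⟪p.2, p.1.2.2⟫))]
        · simp only [inner_add_left, real_inner_smul_left]
        · exact Integrable.of_bound (by fun_prop) ‖h‖ (ae_of_all _ fun _ => h.norm_coe_le_norm _)
    _ = ∫ ω, gaussianSmoothing h (X ω * ⟪U ω, Uhat ω⟫, ‖Uhat ω‖ ^ 2) ∂P := by simp only [hnoise]
    _ = ∫ ω, scalarChannelMean ν h (⟪U ω, Uhat ω⟫, ‖Uhat ω‖ ^ 2) ∂P := by
        have hWX : IndepFun (fun ω => (⟪U ω, Uhat ω⟫, ‖Uhat ω‖ ^ 2)) X P :=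
          (hXindep.comp measurable_id (by fun_prop : Measurable
            fun p : E × E => (⟪p.1, p.2⟫, ‖p.2‖ ^ 2))).symm
        subst hXlaw
        refine hWX.integral_comp_prodMk (by fun_prop) hX.aemeasurable
          (G := fun p => gaussianSmoothing h (p.2 * p.1.1, p.1.2)) ?_
        exact Integrable.of_bound (by fun_prop) ‖gaussianSmoothing h‖
            (ae_of_all _ fun _ => (gaussianSmoothing h).norm_coe_le_norm _)

/-- Cavity lemma, part (ii): if `⟨U_D, Û_D⟩ → q` and `‖Û_D‖² → q` in probability, with
`Z_D` standard Gaussian independent of `(X_D, U_D, Û_D)` and `X_D ~ ν` independent of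
`(U_D, Û_D)`, then `⟨X_D U_D + Z_D, Û_D⟩/√q` converges in distribution to
`√q·X + ξ` with `X ~ ν` and `ξ ~ N(0,1)` independent. -/
theorem cavity_channel_convergence
    (q : ℝ) (hq : 0 < q)
    (ν : Measure ℝ) [IsProbabilityMeasure ν]
    {Ω : Type*} [MeasureSpace Ω] [IsProbabilityMeasure (ℙ : Measure Ω)]
    (X : ℕ → Ω → ℝ) (U Uhat Z : (D : ℕ) → Ω → EuclideanSpace ℝ (Fin D))
    (hXm : ∀ D, Measurable (X D))
    (hUm : ∀ D, Measurable (U D)) (hUhatm : ∀ D, Measurable (Uhat D))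
    (hZm : ∀ D, Measurable (Z D))
    (hXlaw : ∀ D, Measure.map (X D) ℙ = ν)
    (hZlaw : ∀ D, Measure.map (Z D) ℙ =
      Measure.map (WithLp.toLp 2) (Measure.pi fun _ : Fin D => gaussianReal 0 1))
    (hZindep : ∀ D, IndepFun (fun ω => (X D ω, U D ω, Uhat D ω)) (Z D) ℙ)
    (hXindep : ∀ D, IndepFun (X D) (fun ω => (U D ω, Uhat D ω)) ℙ)
    (hoverlap : TendstoInMeasure ℙ (fun D ω => ⟪U D ω, Uhat D ω⟫) atTop fun _ => q)
    (hnorm : TendstoInMeasure ℙ (fun D ω => ‖Uhat D ω‖ ^ 2) atTop fun _ => q) :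
    ∀ f : BoundedContinuousFunction ℝ ℝ,
      Tendsto
        (fun D => ∫ ω, f (⟪X D ω • U D ω + Z D ω, Uhat D ω⟫ / Real.sqrt q) ∂ℙ)
        atTop
        (𝓝 (∫ p : ℝ × ℝ, f (Real.sqrt q * p.1 + p.2)
          ∂(ν.prod (gaussianReal 0 1)))) := by
  intro f
  set h : ℝ →ᵇ ℝ := f.compContinuous ⟨(· / √q), by fun_prop⟩
  have hconv : TendstoInDistribution (fun D ω => (⟪U D ω, Uhat D ω⟫, ‖Uhat D ω‖ ^ 2)) atTop
      (fun _ : Ω => (q, q)) (fun _ => ℙ) ℙ :=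
    (hoverlap.tendstoInDistribution fun D => by fun_prop).prodMk_of_tendstoInMeasure_const _ _ _
      hnorm fun D => by fun_prop
  have hlimit : scalarChannelMean ν h (q, q)
      = ∫ p : ℝ × ℝ, f (√q * p.1 + p.2) ∂(ν.prod (gaussianReal 0 1)) := by
    have hscale : ∀ x t : ℝ, (x * q + √q * t) / √q = √q * x + t := fun x t => by
      field_simp
      linear_combination (-x) * Real.mul_self_sqrt hq.le
    rw [integral_prod (fun p : ℝ × ℝ => f (√q * p.1 + p.2))
      ((f.compContinuous ⟨fun p : ℝ × ℝ => √q * p.1 + p.2, by fun_prop⟩).integrable _)]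
    simp [scalarChannelMean_apply, h, hscale]
  rw [← hlimit]
  convert hconv.tendsto_integral (scalarChannelMean ν h) using 2 with D
  · exact integral_comp_inner_channel ν (hXm D) (hUm D) (hUhatm D) (hZm D) (hXlaw D)
      (by rw [hZlaw, map_pi_eq_stdGaussian]) (hZindep D) (hXindep D) h
  · simp
end
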